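/- arXiv:0909.3009 — 2 statements merged into one kernel-verified Lean document; each statement's English description precedes it below -/
import Mathlib

section
/- Let f : Xⁿ → Y be a quasi-polynomial function, p : Yⁿ → Y a polynomial function, and φ : X → Y a unary function satisfying φ(x) = med(φ(0), φ(x), φ(1)) for all x ∈ X. Then f(x₁,…,xₙ) = p(φ(x₁),…,φ(xₙ)) for all x ∈ Xⁿ if and only if both (a) p_f(y) = med(f(0,…,0), p(y), f(1,…,1)) for all y ∈ Yⁿ, and (b) δ_f(x) = med(p(0,…,0), φ(x), p(1,…,1)) for all x ∈ X. In particular, f(x₁,…,xₙ) = p_f(δ_f(x₁),…,δ_f(xₙ)) for all x ∈ Xⁿ. -/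
/-- Lattice polynomial functions in `n` variables on a bounded distributive lattice. -/
inductive IsLatticePolynomial {L : Type*} [DistribLattice L] [BoundedOrder L] {n : ℕ} :
    ((Fin n → L) → L) → Prop
  | proj (i : Fin n) : IsLatticePolynomial (fun x => x i)
  | const (c : L) : IsLatticePolynomial (fun _ => c)
  | inf {p q : (Fin n → L) → L} :
      IsLatticePolynomial p → IsLatticePolynomial q → IsLatticePolynomial (fun x => p x ⊓ q x)
  | sup {p q : (Fin n → L) → L} :
      IsLatticePolynomial p → IsLatticePolynomial q → IsLatticePolynomial (fun x => p x ⊔ q x)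

/-- The ternary median in a lattice. -/
def med {L : Type*} [Lattice L] (a b c : L) : L := (a ⊓ b) ⊔ (b ⊓ c) ⊔ (c ⊓ a)

/-- `f` is a quasi-polynomial function. -/
def IsQuasiPolynomial {X Y : Type*} [DistribLattice X] [BoundedOrder X]
    [DistribLattice Y] [BoundedOrder Y] {n : ℕ} (f : (Fin n → X) → Y) : Prop :=
  ∃ (p : (Fin n → Y) → Y) (φ : X → Y), IsLatticePolynomial p ∧
    (∀ x : X, φ x = med (φ ⊥) (φ x) (φ ⊤)) ∧ (∀ x, f x = p (fun i => φ (x i)))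

/-- `e_I`: the 0-1 tuple whose `i`th component is `⊤` iff `i ∈ I`. -/
def eTuple {L : Type*} [Lattice L] [BoundedOrder L] {n : ℕ} (I : Finset (Fin n)) :
    Fin n → L := fun i => if i ∈ I then ⊤ else ⊥

/-- `f̂(e_J) = ⋁_{S ⊆ J} ⋀_{T ⊆ Jᶜ} f(e_{S ∪ T})`. -/
def fHat {X Y : Type*} [DistribLattice X] [BoundedOrder X]
    [DistribLattice Y] [BoundedOrder Y] {n : ℕ}
    (f : (Fin n → X) → Y) (J : Finset (Fin n)) : Y :=
  J.powerset.sup fun S => Jᶜ.powerset.inf fun T => f (eTuple (S ∪ T))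

/-- The polynomial function `p_f(y) = ⋁_{I ⊆ [n]} ( f̂(e_I) ∧ ⋀_{i ∈ I} y_i )`. -/
def polyOf {X Y : Type*} [DistribLattice X] [BoundedOrder X]
    [DistribLattice Y] [BoundedOrder Y] {n : ℕ}
    (f : (Fin n → X) → Y) : (Fin n → Y) → Y :=
  fun y => Finset.univ.sup fun I : Finset (Fin n) => fHat f I ⊓ I.inf y

section Identities
variable {L : Type*} [DistribLattice L]

lemma med_expand (x y z : L) : med x y z = (y ⊓ (x ⊔ z)) ⊔ (x ⊓ z) := by
  simp only [med, inf_sup_left]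
  rw [inf_comm z x, inf_comm y x, inf_comm y z]

/-- key distributive identity for the `inf` case of the unary representation -/
lemma rep_inf_id (c1 d1 c2 d2 t : L) :
    (c1 ⊔ t ⊓ d1) ⊓ (c2 ⊔ t ⊓ d2)
      = (c1 ⊓ c2) ⊔ t ⊓ ((c1 ⊓ d2) ⊔ (d1 ⊓ c2) ⊔ (d1 ⊓ d2)) := by
  apply le_antisymm
  · rw [inf_sup_right, inf_sup_left, inf_sup_left]
    refine sup_le (sup_le le_sup_left ?_) (sup_le ?_ ?_)
    · exact le_sup_of_le_right (le_inf (inf_le_right.trans inf_le_left)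
        (le_sup_of_le_left (le_sup_of_le_left (inf_le_inf_left _ inf_le_right))))
    · exact le_sup_of_le_right (le_inf (inf_le_left.trans inf_le_left)
        (le_sup_of_le_left (le_sup_of_le_right (inf_le_inf_right _ inf_le_right))))
    · exact le_sup_of_le_right (le_inf (inf_le_left.trans inf_le_left)
        (le_sup_of_le_right (inf_le_inf inf_le_right inf_le_right)))
  · refine sup_le (le_inf (inf_le_left.trans le_sup_left) (inf_le_right.trans le_sup_left)) ?_
    rw [inf_sup_left, inf_sup_left]
    refine sup_le (sup_le ?_ ?_) ?_
    · exact le_inf (le_sup_of_le_left (inf_le_right.trans inf_le_left))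
        (le_sup_of_le_right (le_inf inf_le_left (inf_le_right.trans inf_le_right)))
    · exact le_inf (le_sup_of_le_right (le_inf inf_le_left (inf_le_right.trans inf_le_left)))
        (le_sup_of_le_left (inf_le_right.trans inf_le_right))
    · exact le_inf (le_sup_of_le_right (le_inf inf_le_left (inf_le_right.trans inf_le_left)))
        (le_sup_of_le_right (le_inf inf_le_left (inf_le_right.trans inf_le_right)))

/-- key distributive identity for the `inf` case of the diagonal lemma -/
lemma diag_inf_id {c1 d1 c2 d2 : L} (h1 : c1 ≤ d1) (h2 : c2 ≤ d2) (y : L) :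
    (c1 ⊔ y ⊓ d1) ⊓ (c2 ⊔ y ⊓ d2) = (c1 ⊓ c2) ⊔ y ⊓ (d1 ⊓ d2) := by
  apply le_antisymm
  · rw [inf_sup_right, inf_sup_left, inf_sup_left]
    refine sup_le (sup_le le_sup_left ?_) (sup_le ?_ ?_)
    · exact le_sup_of_le_right (le_inf (inf_le_right.trans inf_le_left)
        (le_inf ((inf_le_left.trans h1)) (inf_le_right.trans inf_le_right)))
    · exact le_sup_of_le_right (le_inf (inf_le_left.trans inf_le_left)
        (le_inf (inf_le_left.trans inf_le_right) (inf_le_right.trans h2)))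
    · exact le_sup_of_le_right (le_inf (inf_le_left.trans inf_le_left)
        (inf_le_inf inf_le_right inf_le_right))
  · refine sup_le (le_inf (inf_le_left.trans le_sup_left) (inf_le_right.trans le_sup_left)) ?_
    exact le_inf (le_sup_of_le_right (inf_le_inf le_rfl inf_le_left))
      (le_sup_of_le_right (inf_le_inf le_rfl inf_le_right))
end Identities

section Aux
variable {Y : Type*} [DistribLattice Y] [BoundedOrder Y] {n : ℕ}

lemma IsLatticePolynomial.mono {p : (Fin n → Y) → Y} (hp : IsLatticePolynomial p) :
    ∀ {u v : Fin n → Y}, (∀ i, u i ≤ v i) → p u ≤ p v := by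
  induction hp with
  | proj i => exact fun h => h i
  | const c => exact fun _ => le_rfl
  | inf h1 h2 ih1 ih2 => exact fun h => inf_le_inf (ih1 h) (ih2 h)
  | sup h1 h2 ih1 ih2 => exact fun h => sup_le_sup (ih1 h) (ih2 h)

/-- Unary representation: as a function of one coordinate, `p` is `c ⊔ (t ⊓ d)`. -/
lemma IsLatticePolynomial.update_rep {p : (Fin n → Y) → Y} (hp : IsLatticePolynomial p)
    (z : Fin n → Y) (i : Fin n) :
    ∃ c d : Y, ∀ t, p (Function.update z i t) = c ⊔ (t ⊓ d) := by
  induction hp with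
  | proj j =>
    rcases eq_or_ne j i with rfl | hne
    · exact ⟨⊥, ⊤, fun t => by simp⟩
    · exact ⟨z j, ⊥, fun t => by simp [Function.update_of_ne hne]⟩
  | const c => exact ⟨c, ⊥, fun t => by simp⟩
  | inf h1 h2 ih1 ih2 =>
    obtain ⟨c1, d1, e1⟩ := ih1; obtain ⟨c2, d2, e2⟩ := ih2
    exact ⟨c1 ⊓ c2, (c1 ⊓ d2) ⊔ (d1 ⊓ c2) ⊔ (d1 ⊓ d2), fun t => by
      dsimp only; rw [e1, e2, rep_inf_id]⟩
  | sup h1 h2 ih1 ih2 =>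
    obtain ⟨c1, d1, e1⟩ := ih1; obtain ⟨c2, d2, e2⟩ := ih2
    refine ⟨c1 ⊔ c2, d1 ⊔ d2, fun t => ?_⟩
    dsimp only
    rw [e1, e2, inf_sup_left]
    rw [sup_assoc, sup_left_comm (t ⊓ d1) c2 (t ⊓ d2), ← sup_assoc]

lemma IsLatticePolynomial.update_inf {p : (Fin n → Y) → Y} (hp : IsLatticePolynomial p)
    (z : Fin n → Y) (i : Fin n) (s t : Y) :
    p (Function.update z i (s ⊓ t)) = p (Function.update z i s) ⊓ p (Function.update z i t) := by
  obtain ⟨c, d, e⟩ := hp.update_rep z i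
  rw [e, e, e, ← sup_inf_left]
  congr 1
  rw [inf_inf_inf_comm, inf_idem]

lemma IsLatticePolynomial.update_sup {p : (Fin n → Y) → Y} (hp : IsLatticePolynomial p)
    (z : Fin n → Y) (i : Fin n) (s t : Y) :
    p (Function.update z i (s ⊔ t)) = p (Function.update z i s) ⊔ p (Function.update z i t) := by
  obtain ⟨c, d, e⟩ := hp.update_rep z i
  rw [e, e, e, inf_sup_right, sup_sup_sup_comm, sup_idem]

/-- Diagonal of a polynomial. -/
lemma IsLatticePolynomial.diag {p : (Fin n → Y) → Y} (hp : IsLatticePolynomial p) (y : Y) :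
    p (fun _ => y) = p (fun _ => (⊥ : Y)) ⊔ (y ⊓ p (fun _ => (⊤ : Y))) := by
  induction hp with
  | proj i => simp
  | const c => simp
  | @inf p1 p2 h1 h2 ih1 ih2 =>
    dsimp only
    rw [ih1, ih2]
    exact diag_inf_id (h1.mono (fun _ => bot_le)) (h2.mono (fun _ => bot_le)) y
  | @sup p1 p2 h1 h2 ih1 ih2 =>
    dsimp only
    rw [ih1, ih2, inf_sup_left, sup_sup_sup_comm]
end Aux

section Aux2
variable {Y : Type*} [DistribLattice Y] [BoundedOrder Y] {n : ℕ}

lemma finset_sup_sup {σ : Type*} (s : Finset σ) (f g : σ → Y) :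
    s.sup (fun x => f x ⊔ g x) = s.sup f ⊔ s.sup g := by
  apply le_antisymm
  · exact Finset.sup_le fun i hi => sup_le_sup (Finset.le_sup hi) (Finset.le_sup hi)
  · exact sup_le (Finset.sup_mono_fun fun i _ => le_sup_left)
      (Finset.sup_mono_fun fun i _ => le_sup_right)

lemma finset_inf_inf {σ : Type*} (s : Finset σ) (f g : σ → Y) :
    s.inf (fun x => f x ⊓ g x) = s.inf f ⊓ s.inf g := by
  apply le_antisymm
  · exact le_inf (Finset.inf_mono_fun fun i _ => inf_le_left)
      (Finset.inf_mono_fun fun i _ => inf_le_right)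
  · exact Finset.le_inf fun i hi => inf_le_inf (Finset.inf_le hi) (Finset.inf_le hi)

lemma eTuple_mono {I J : Finset (Fin n)} (h : I ⊆ J) (i : Fin n) :
    (eTuple I : Fin n → Y) i ≤ eTuple J i := by
  unfold eTuple
  by_cases hi : i ∈ I
  · simp [hi, h hi]
  · simp [hi]

lemma IsLatticePolynomial.const_inf {p : (Fin n → Y) → Y} (hp : IsLatticePolynomial p)
    (a b : Y) : p (fun _ => a) ⊓ p (fun _ => b) = p (fun _ => a ⊓ b) := by
  rw [hp.diag a, hp.diag b, hp.diag (a ⊓ b), ← sup_inf_left]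
  congr 1
  rw [inf_inf_inf_comm, inf_idem]

lemma IsLatticePolynomial.const_sup {p : (Fin n → Y) → Y} (hp : IsLatticePolynomial p)
    (a b : Y) : p (fun _ => a) ⊔ p (fun _ => b) = p (fun _ => a ⊔ b) := by
  rw [hp.diag a, hp.diag b, hp.diag (a ⊔ b), sup_sup_sup_comm, sup_idem, inf_sup_right]

/-- Disjunctive normal form. -/
lemma IsLatticePolynomial.dnf {p : (Fin n → Y) → Y} (hp : IsLatticePolynomial p)
    (y : Fin n → Y) :
    p y = Finset.univ.sup fun I : Finset (Fin n) => p (eTuple I) ⊓ I.inf y := by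
  induction hp with
  | proj i =>
    dsimp only
    apply le_antisymm
    · refine le_trans ?_ (Finset.le_sup
        (f := fun I : Finset (Fin n) => eTuple I i ⊓ I.inf y) (Finset.mem_univ {i}))
      simp [eTuple]
    · refine Finset.sup_le fun I _ => ?_
      by_cases hi : i ∈ I
      · exact le_trans inf_le_right (Finset.inf_le hi)
      · simp [eTuple, hi]
  | const c =>
    dsimp only
    apply le_antisymm
    · refine le_trans ?_ (Finset.le_sup
        (f := fun I : Finset (Fin n) => c ⊓ I.inf y) (Finset.mem_univ ∅))
      simp
    · exact Finset.sup_le fun I _ => inf_le_left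
  | @inf p1 p2 h1 h2 ih1 ih2 =>
    dsimp only
    rw [ih1, ih2]
    apply le_antisymm
    · rw [Finset.sup_inf_distrib_right]
      refine Finset.sup_le fun I _ => ?_
      rw [Finset.sup_inf_distrib_left]
      refine Finset.sup_le fun J _ => ?_
      refine le_trans ?_ (Finset.le_sup (Finset.mem_univ (I ∪ J)))
      refine le_inf (le_inf ?_ ?_) ?_
      · exact inf_le_left.trans (inf_le_left.trans (h1.mono (eTuple_mono Finset.subset_union_left)))
      · exact inf_le_right.trans (inf_le_left.trans (h2.mono (eTuple_mono Finset.subset_union_right)))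
      · rw [Finset.inf_union]
        exact inf_le_inf inf_le_right inf_le_right
    · refine Finset.sup_le fun K _ => ?_
      refine le_inf ?_ ?_
      · exact le_trans (inf_le_inf_right _ inf_le_left) (Finset.le_sup (f := fun I => p1 (eTuple I) ⊓ I.inf y) (Finset.mem_univ K))
      · exact le_trans (inf_le_inf_right _ inf_le_right) (Finset.le_sup (f := fun I => p2 (eTuple I) ⊓ I.inf y) (Finset.mem_univ K))
  | @sup p1 p2 h1 h2 ih1 ih2 =>
    dsimp only
    rw [ih1, ih2, ← finset_sup_sup]
    congr 1
    funext I
    rw [inf_sup_right]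
end Aux2

section Med
variable {Y : Type*} [DistribLattice Y] [BoundedOrder Y] {n : ℕ}
variable {p : (Fin n → Y) → Y} (hp : IsLatticePolynomial p) (a b : Y)

set_option linter.unusedSectionVars false in
lemma med_mono_mid {A B s t : Y} (h : s ≤ t) : med A s B ≤ med A t B := by
  rw [med_expand, med_expand]
  exact sup_le_sup_right (inf_le_inf_right _ h) _

include hp

lemma med_poly (A B : Y) : IsLatticePolynomial (fun y => med A (p y) B) := by
  have : (fun y => med A (p y) B)
      = fun y => ((fun _ => A) y ⊓ p y ⊔ p y ⊓ (fun _ => B) y) ⊔ (fun _ => B ⊓ A) y := by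
    funext y; rfl
  rw [this]
  exact .sup (.sup (.inf (.const A) hp) (.inf hp (.const B))) (.const (B ⊓ A))

lemma key1 : p (fun _ => a ⊔ b) ≤ (a ⊔ b) ⊔ p (fun _ => a ⊓ b) := by
  rw [hp.diag (a ⊔ b), hp.diag (a ⊓ b)]
  refine sup_le (le_sup_of_le_right le_sup_left) (le_sup_of_le_left inf_le_left)

lemma key2 : (a ⊓ b) ⊓ p (fun _ => a ⊔ b) ≤ p (fun _ => a ⊓ b) := by
  rw [hp.diag (a ⊔ b), hp.diag (a ⊓ b), inf_sup_left]
  refine sup_le (le_sup_of_le_left inf_le_right) ?_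
  exact le_sup_of_le_right (le_inf inf_le_left (inf_le_right.trans inf_le_right))

/-- `med A (p y) B` with the outer values at constant tuples `a, b`, in expanded form. -/
lemma med_poly_expand (y : Fin n → Y) :
    med (p (fun _ => a)) (p y) (p (fun _ => b))
      = (p y ⊓ p (fun _ => a ⊔ b)) ⊔ p (fun _ => a ⊓ b) := by
  rw [med_expand, hp.const_sup, hp.const_inf]

/-- Lemma M : clamping does nothing when all arguments lie in `[a ⊓ b, a ⊔ b]`. -/
lemma med_clamp_id {y : Fin n → Y} (hlo : ∀ i, a ⊓ b ≤ y i) (hhi : ∀ i, y i ≤ a ⊔ b) :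
    med (p (fun _ => a)) (p y) (p (fun _ => b)) = p y := by
  rw [med_poly_expand hp]
  rw [inf_eq_left.mpr (hp.mono (fun i => hhi i)), sup_eq_left.mpr (hp.mono (fun i => hlo i))]

/-- Lemma S : replacing a `⊤` coordinate by `a ⊔ b` does not change the clamped value. -/
lemma step_top (z : Fin n → Y) (i : Fin n) :
    med (p (fun _ => a)) (p (Function.update z i ⊤)) (p (fun _ => b))
      = med (p (fun _ => a)) (p (Function.update z i (a ⊔ b))) (p (fun _ => b)) := by
  obtain ⟨c, d, e⟩ := hp.update_rep z i
  rw [med_poly_expand hp, med_poly_expand hp, e, e]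
  set α := p (fun _ => a ⊓ b) with hα
  set β := p (fun _ => a ⊔ b) with hβ
  rw [top_inf_eq]
  apply le_antisymm
  · rw [inf_sup_right]
    refine sup_le (sup_le ?_ ?_) le_sup_right
    · exact le_sup_of_le_left (inf_le_inf_right _ le_sup_left)
    · -- d ⊓ β ≤ ((c ⊔ (a ⊔ b) ⊓ d) ⊓ β) ⊔ α
      have h1 : d ⊓ β ≤ ((a ⊔ b) ⊓ d) ⊔ α := by
        calc d ⊓ β ≤ d ⊓ ((a ⊔ b) ⊔ α) := inf_le_inf_left d (key1 hp a b)
          _ = (d ⊓ (a ⊔ b)) ⊔ (d ⊓ α) := by rw [inf_sup_left]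
          _ ≤ ((a ⊔ b) ⊓ d) ⊔ α := sup_le_sup (inf_comm d (a ⊔ b)).le inf_le_right
      calc d ⊓ β = (d ⊓ β) ⊓ β := by rw [inf_assoc, inf_idem]
        _ ≤ (((a ⊔ b) ⊓ d) ⊔ α) ⊓ β := inf_le_inf_right _ h1
        _ = (((a ⊔ b) ⊓ d) ⊓ β) ⊔ (α ⊓ β) := by rw [inf_sup_right]
        _ ≤ ((c ⊔ (a ⊔ b) ⊓ d) ⊓ β) ⊔ α :=
            sup_le_sup (inf_le_inf_right _ le_sup_right) inf_le_left
  · exact sup_le_sup_right (inf_le_inf_right _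
      (sup_le_sup_left inf_le_right _)) _

/-- Lemma S' : replacing a `⊥` coordinate by `a ⊓ b` does not change the clamped value. -/
lemma step_bot (z : Fin n → Y) (i : Fin n) :
    med (p (fun _ => a)) (p (Function.update z i ⊥)) (p (fun _ => b))
      = med (p (fun _ => a)) (p (Function.update z i (a ⊓ b))) (p (fun _ => b)) := by
  obtain ⟨c, d, e⟩ := hp.update_rep z i
  rw [med_poly_expand hp, med_poly_expand hp, e, e]
  set α := p (fun _ => a ⊓ b) with hα
  set β := p (fun _ => a ⊔ b) with hβ
  rw [bot_inf_eq, sup_bot_eq]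
  apply le_antisymm
  · exact sup_le_sup_right (inf_le_inf_right _ le_sup_left) _
  · rw [inf_sup_right (c := β)]
    refine sup_le (sup_le (le_sup_of_le_left le_rfl) ?_) le_sup_right
    refine le_sup_of_le_right ?_
    calc ((a ⊓ b) ⊓ d) ⊓ β ≤ (a ⊓ b) ⊓ β := inf_le_inf_right _ inf_le_left
      _ ≤ α := key2 hp a b
end Med

section Med2
variable {Y : Type*} [DistribLattice Y] [BoundedOrder Y] {n : ℕ}
variable {p : (Fin n → Y) → Y} (hp : IsLatticePolynomial p) (a b : Y)
include hp

lemma med_bot_top (t : Y) :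
    med (p (fun _ => ⊥)) t (p (fun _ => ⊤)) = p (fun _ => ⊥) ⊔ (t ⊓ p (fun _ => ⊤)) := by
  have h : p (fun _ => (⊥:Y)) ≤ p (fun _ => (⊤:Y)) := hp.mono fun _ => bot_le
  rw [med_expand, sup_eq_right.mpr h, inf_eq_left.mpr h, sup_comm]

/-- Lemma R : replacing a coordinate `t ≤ a ⊔ b` by its `[p ⊥⃗, p ⊤⃗]`-clamp
does not change the `[p a⃗, p b⃗]`-clamped value. -/
lemma step_clamp (z : Fin n → Y) (i : Fin n) {t : Y} (ht : t ≤ a ⊔ b) :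
    med (p (fun _ => a))
      (p (Function.update z i (med (p (fun _ => ⊥)) t (p (fun _ => ⊤)))))
      (p (fun _ => b))
      = med (p (fun _ => a)) (p (Function.update z i t)) (p (fun _ => b)) := by
  obtain ⟨c, d, e⟩ := hp.update_rep z i
  rw [med_bot_top hp, med_poly_expand hp, med_poly_expand hp, e, e]
  set L := p (fun _ => (⊥:Y)) with hL
  set U := p (fun _ => (⊤:Y)) with hU
  set α := p (fun _ => a ⊓ b) with hα
  set β := p (fun _ => a ⊔ b) with hβ
  have hLα : L ≤ α := hp.mono fun _ => bot_le
  have hk3 : t ⊓ β ≤ (t ⊓ L) ⊔ (t ⊓ U) := by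
    have : β ≤ L ⊔ ((a ⊔ b) ⊓ U) := by rw [hβ, hp.diag (a ⊔ b)]
    calc t ⊓ β ≤ t ⊓ (L ⊔ ((a ⊔ b) ⊓ U)) := inf_le_inf_left t this
      _ = (t ⊓ L) ⊔ (t ⊓ ((a ⊔ b) ⊓ U)) := by rw [inf_sup_left]
      _ ≤ (t ⊓ L) ⊔ (t ⊓ U) := by
          refine sup_le_sup_left ?_ _
          rw [← inf_assoc, inf_eq_left.mpr ht]
  apply le_antisymm
  · refine sup_le ?_ le_sup_right
    calc (c ⊔ (L ⊔ t ⊓ U) ⊓ d) ⊓ β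
        ≤ ((c ⊔ t ⊓ d) ⊔ L) ⊓ β := by
          refine inf_le_inf_right _ (sup_le (le_sup_of_le_left le_sup_left) ?_)
          rw [inf_sup_right]
          refine sup_le (le_sup_of_le_right inf_le_left)
            (le_sup_of_le_left (le_sup_of_le_right (inf_le_inf_right d inf_le_left)))
      _ = ((c ⊔ t ⊓ d) ⊓ β) ⊔ (L ⊓ β) := by rw [inf_sup_right]
      _ ≤ ((c ⊔ t ⊓ d) ⊓ β) ⊔ α := sup_le_sup_left (inf_le_left.trans hLα) _
  · refine sup_le ?_ le_sup_right
    have hsplit : (c ⊔ t ⊓ d) ⊓ β = (c ⊓ β) ⊔ ((t ⊓ d) ⊓ β) := by rw [inf_sup_right]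
    rw [hsplit]
    refine sup_le (le_sup_of_le_left (inf_le_inf_right _ le_sup_left)) ?_
    have h1 : (t ⊓ d) ⊓ β ≤ ((t ⊓ L) ⊔ (t ⊓ U)) ⊓ d := by
      calc (t ⊓ d) ⊓ β = (t ⊓ β) ⊓ d := by rw [inf_assoc, inf_comm d β, ← inf_assoc]
        _ ≤ ((t ⊓ L) ⊔ (t ⊓ U)) ⊓ d := inf_le_inf_right d hk3
    calc (t ⊓ d) ⊓ β = ((t ⊓ d) ⊓ β) ⊓ β := by rw [inf_assoc (t ⊓ d) β β, inf_idem]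
      _ ≤ (((t ⊓ L) ⊔ (t ⊓ U)) ⊓ d) ⊓ β := inf_le_inf_right _ h1
      _ = (((t ⊓ L) ⊓ d) ⊔ ((t ⊓ U) ⊓ d)) ⊓ β := by rw [inf_sup_right (a := t ⊓ L)]
      _ = ((t ⊓ L) ⊓ d) ⊓ β ⊔ ((t ⊓ U) ⊓ d) ⊓ β := by rw [inf_sup_right]
      _ ≤ α ⊔ ((c ⊔ (L ⊔ t ⊓ U) ⊓ d) ⊓ β) := by
          refine sup_le_sup ?_ (inf_le_inf_right _ ?_)
          · exact ((inf_le_left.trans inf_le_right).trans hLα).trans' inf_le_left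
          · exact le_sup_of_le_right (inf_le_inf_right d le_sup_right)
      _ = ((c ⊔ (L ⊔ t ⊓ U) ⊓ d) ⊓ β) ⊔ α := sup_comm _ _

omit [BoundedOrder Y] hp in
/-- Chain lemma: coordinatewise invariance under clamping gives global invariance. -/
lemma med_chain {v w : Fin n → Y}
    (h : ∀ (z : Fin n → Y) (i : Fin n),
      med (p (fun _ => a)) (p (Function.update z i (v i))) (p (fun _ => b))
        = med (p (fun _ => a)) (p (Function.update z i (w i))) (p (fun _ => b))) :
    med (p (fun _ => a)) (p v) (p (fun _ => b))
      = med (p (fun _ => a)) (p w) (p (fun _ => b)) := by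
  have key : ∀ K : Finset (Fin n),
      med (p (fun _ => a)) (p (fun j => if j ∈ K then w j else v j)) (p (fun _ => b))
        = med (p (fun _ => a)) (p v) (p (fun _ => b)) := by
    intro K
    induction K using Finset.induction_on with
    | empty => simp
    | @insert i K hiK ih =>
      set hyb := fun j => if j ∈ K then w j else v j with hhyb
      have e1 : (fun j => if j ∈ insert i K then w j else v j)
          = Function.update hyb i (w i) := by
        funext j
        rcases eq_or_ne j i with rfl | hne
        · simp [hhyb, Function.update_self]
        · simp [Function.update_of_ne hne, hhyb, hne]
      have e2 : hyb = Function.update hyb i (v i) := by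
        funext j
        rcases eq_or_ne j i with rfl | hne
        · simp [hhyb, hiK]
        · simp [Function.update_of_ne hne]
      rw [e1, ← h hyb i, ← e2, ih]
  have huniv := key Finset.univ
  simp only [Finset.mem_univ, if_true] at huniv
  exact huniv.symm
end Med2

section Cube
variable {Y : Type*} [DistribLattice Y] [BoundedOrder Y] {n : ℕ}
variable {p : (Fin n → Y) → Y} (hp : IsLatticePolynomial p) (a b : Y)
include hp

lemma cube_inf : ∀ (M : Finset (Fin n)) (z : Fin n → Y),
    M.powerset.inf (fun T => p fun j => if j ∈ T then b else if j ∈ M then a else z j)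
      = p (fun j => if j ∈ M then a ⊓ b else z j) := by
  intro M
  induction M using Finset.induction_on with
  | empty => intro z; simp
  | @insert i M hiM ih =>
    intro z
    rw [Finset.powerset_insert, Finset.inf_union, Finset.inf_image, ← finset_inf_inf]
    have hcongr : ∀ T ∈ M.powerset,
        (p fun j => if j ∈ T then b else if j ∈ insert i M then a else z j) ⊓
          ((fun T => p fun j => if j ∈ T then b else if j ∈ insert i M then a else z j)
            ∘ insert i) T
        = p fun j => if j ∈ T then b else if j ∈ M then a
            else (Function.update z i (a ⊓ b)) j := by
      intro T hT
      have hiT : i ∉ T := fun h => hiM (Finset.mem_powerset.mp hT h)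
      set h0 : Fin n → Y := fun j => if j ∈ T then b else if j ∈ M then a else z j with hh0
      have e1 : (fun j => if j ∈ T then b else if j ∈ insert i M then a else z j)
          = Function.update h0 i a := by
        funext j
        rcases eq_or_ne j i with rfl | hne
        · simp [hiT, hiM, hh0]
        · simp [Function.update_of_ne hne, hh0, hne]
      have e2 : ((fun j => if j ∈ insert i T then b else if j ∈ insert i M then a else z j))
          = Function.update h0 i b := by
        funext j
        rcases eq_or_ne j i with rfl | hne
        · simp [hh0]
        · simp [Function.update_of_ne hne, hh0, hne]
      have e3 : Function.update h0 i (a ⊓ b)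
          = fun j => if j ∈ T then b else if j ∈ M then a
              else (Function.update z i (a ⊓ b)) j := by
        funext j
        rcases eq_or_ne j i with rfl | hne
        · simp [hiT, hiM]
        · simp [Function.update_of_ne hne, hh0]
      rw [Function.comp_apply, e1, e2, ← hp.update_inf, e3]
    rw [Finset.inf_congr rfl hcongr, ih (Function.update z i (a ⊓ b))]
    congr 1
    funext j
    rcases eq_or_ne j i with rfl | hne
    · simp [hiM]
    · simp [Function.update_of_ne hne, hne]

lemma cube_sup : ∀ (M : Finset (Fin n)) (z : Fin n → Y),
    M.powerset.sup (fun S => p fun j => if j ∈ S then b else if j ∈ M then a else z j)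
      = p (fun j => if j ∈ M then a ⊔ b else z j) := by
  intro M
  induction M using Finset.induction_on with
  | empty => intro z; simp
  | @insert i M hiM ih =>
    intro z
    rw [Finset.powerset_insert, Finset.sup_union, Finset.sup_image, ← finset_sup_sup]
    have hcongr : ∀ T ∈ M.powerset,
        (p fun j => if j ∈ T then b else if j ∈ insert i M then a else z j) ⊔
          ((fun T => p fun j => if j ∈ T then b else if j ∈ insert i M then a else z j)
            ∘ insert i) T
        = p fun j => if j ∈ T then b else if j ∈ M then a
            else (Function.update z i (a ⊔ b)) j := by
      intro T hT
      have hiT : i ∉ T := fun h => hiM (Finset.mem_powerset.mp hT h)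
      set h0 : Fin n → Y := fun j => if j ∈ T then b else if j ∈ M then a else z j with hh0
      have e1 : (fun j => if j ∈ T then b else if j ∈ insert i M then a else z j)
          = Function.update h0 i a := by
        funext j
        rcases eq_or_ne j i with rfl | hne
        · simp [hiT, hiM, hh0]
        · simp [Function.update_of_ne hne, hh0, hne]
      have e2 : ((fun j => if j ∈ insert i T then b else if j ∈ insert i M then a else z j))
          = Function.update h0 i b := by
        funext j
        rcases eq_or_ne j i with rfl | hne
        · simp [hh0]
        · simp [Function.update_of_ne hne, hh0, hne]
      have e3 : Function.update h0 i (a ⊔ b)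
          = fun j => if j ∈ T then b else if j ∈ M then a
              else (Function.update z i (a ⊔ b)) j := by
        funext j
        rcases eq_or_ne j i with rfl | hne
        · simp [hiT, hiM]
        · simp [Function.update_of_ne hne, hh0]
      rw [Function.comp_apply, e1, e2, ← hp.update_sup, e3]
    rw [Finset.sup_congr rfl hcongr, ih (Function.update z i (a ⊔ b))]
    congr 1
    funext j
    rcases eq_or_ne j i with rfl | hne
    · simp [hiM]
    · simp [Function.update_of_ne hne, hne]
end Cube

section Main
variable {Y : Type*} [DistribLattice Y] [BoundedOrder Y] {n : ℕ}
variable {p : (Fin n → Y) → Y} (hp : IsLatticePolynomial p) (a b : Y)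
include hp

/-- Lemma W. -/
lemma med_W (J : Finset (Fin n)) :
    p (fun i => if i ∈ J then a ⊔ b else a ⊓ b)
      = med (p (fun _ => a)) (p (eTuple J)) (p (fun _ => b)) := by
  have hchain := med_chain (p := p) (a := a) (b := b)
    (v := eTuple J) (w := fun i => if i ∈ J then a ⊔ b else a ⊓ b)
    (fun z i => by
      by_cases hi : i ∈ J
      · simpa [eTuple, hi] using step_top hp a b z i
      · simpa [eTuple, hi] using step_bot hp a b z i)
  rw [hchain]
  exact Eq.symm <| med_clamp_id hp a b
    (fun i => by by_cases hi : i ∈ J <;> simp [hi, inf_le_sup])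
    (fun i => by by_cases hi : i ∈ J <;> simp [hi, inf_le_sup])

/-- med of `p` at `[p ⊥⃗, p ⊤⃗]` is the constant-tuple value. -/
lemma med_const (t : Y) :
    med (p (fun _ => ⊥)) t (p (fun _ => ⊤)) = p (fun _ => t) := by
  rw [med_bot_top hp, ← hp.diag]

/-- Recovery: clamping the arguments to `[p ⊥⃗, p ⊤⃗]` and then the value
to `[p a⃗, p b⃗]` recovers `p y` when the `y i` lie in `[a ⊓ b, a ⊔ b]`. -/
lemma recover {y : Fin n → Y} (hlo : ∀ i, a ⊓ b ≤ y i) (hhi : ∀ i, y i ≤ a ⊔ b) :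
    med (p (fun _ => a))
      (p (fun i => med (p (fun _ => ⊥)) (y i) (p (fun _ => ⊤))))
      (p (fun _ => b)) = p y := by
  have hchain := med_chain (p := p) (a := a) (b := b)
    (v := fun i => med (p (fun _ => ⊥)) (y i) (p (fun _ => ⊤))) (w := y)
    (fun z i => step_clamp hp a b z i (hhi i))
  rw [hchain]
  exact med_clamp_id hp a b hlo hhi
end Main

section Main2
variable {X Y : Type*} [DistribLattice X] [BoundedOrder X]
  [DistribLattice Y] [BoundedOrder Y] {n : ℕ}

lemma fHat_eq (f : (Fin n → X) → Y) {p : (Fin n → Y) → Y} (hp : IsLatticePolynomial p)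
    (φ : X → Y) (hpf : ∀ x, f x = p (fun i => φ (x i))) (J : Finset (Fin n)) :
    fHat f J = med (p (fun _ => φ ⊥)) (p (eTuple J)) (p (fun _ => φ ⊤)) := by
  set a := φ (⊥ : X) with ha
  set b := φ (⊤ : X) with hb
  rw [← med_W hp a b J]
  unfold fHat
  have hinner : ∀ S ∈ J.powerset,
      (Jᶜ.powerset.inf fun T => f (eTuple (S ∪ T)))
        = p fun j => if j ∈ S then b else if j ∈ J then a else a ⊓ b := by
    intro S hS
    have hSJ : S ⊆ J := Finset.mem_powerset.mp hS
    have h1 : ∀ T ∈ Jᶜ.powerset, f (eTuple (S ∪ T))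
        = p fun j => if j ∈ T then b else if j ∈ Jᶜ then a
            else (fun j' => if j' ∈ S then b else a) j := by
      intro T hT
      have hTJ : T ⊆ Jᶜ := Finset.mem_powerset.mp hT
      rw [hpf]
      congr 1
      funext j
      by_cases hjT : j ∈ T
      · simp [eTuple, hjT, hb]
      · by_cases hjS : j ∈ S
        · have : j ∉ Jᶜ := fun h => (Finset.mem_compl.mp h) (hSJ hjS)
          simp [eTuple, hjT, hjS, this, hb]
        · simp [eTuple, hjT, hjS, ha]
    rw [Finset.inf_congr rfl h1, cube_inf hp a b Jᶜ (fun j' => if j' ∈ S then b else a)]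
    congr 1
    funext j
    by_cases hjS : j ∈ S
    · have : j ∉ Jᶜ := fun h => (Finset.mem_compl.mp h) (hSJ hjS)
      simp [hjS, this]
    · by_cases hjJ : j ∈ J
      · simp [hjS, hjJ, Finset.mem_compl]
      · simp [hjS, hjJ, Finset.mem_compl]
  rw [Finset.sup_congr rfl hinner, cube_sup hp a b J (fun _ => a ⊓ b)]
end Main2

section Main3
variable {X Y : Type*} [DistribLattice X] [BoundedOrder X]
  [DistribLattice Y] [BoundedOrder Y] {n : ℕ}

lemma phi_bounds (φ : X → Y) (hφ : ∀ x : X, φ x = med (φ ⊥) (φ x) (φ ⊤)) (x : X) :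
    φ ⊥ ⊓ φ ⊤ ≤ φ x ∧ φ x ≤ φ ⊥ ⊔ φ ⊤ := by
  have h := hφ x
  rw [med_expand] at h
  constructor
  · calc φ ⊥ ⊓ φ ⊤ ≤ (φ x ⊓ (φ ⊥ ⊔ φ ⊤)) ⊔ (φ ⊥ ⊓ φ ⊤) := le_sup_right
      _ = φ x := h.symm
  · calc φ x = (φ x ⊓ (φ ⊥ ⊔ φ ⊤)) ⊔ (φ ⊥ ⊓ φ ⊤) := h
      _ ≤ φ ⊥ ⊔ φ ⊤ := sup_le inf_le_right (inf_le_left.trans le_sup_left)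

lemma forward (f : (Fin n → X) → Y) {p : (Fin n → Y) → Y} (hp : IsLatticePolynomial p)
    (φ : X → Y) (hpf : ∀ x, f x = p (fun i => φ (x i))) :
    (∀ y : Fin n → Y, polyOf f y = med (f (fun _ => ⊥)) (p y) (f (fun _ => ⊤))) ∧
    (∀ x : X, f (fun _ => x) = med (p (fun _ => ⊥)) (φ x) (p (fun _ => ⊤))) := by
  have hfbot : f (fun _ => ⊥) = p (fun _ => φ ⊥) := hpf (fun _ => ⊥)
  have hftop : f (fun _ => ⊤) = p (fun _ => φ ⊤) := hpf (fun _ => ⊤)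
  constructor
  · intro y
    have hF : IsLatticePolynomial (fun y => med (p (fun _ => φ ⊥)) (p y) (p (fun _ => φ ⊤))) :=
      med_poly hp _ _
    calc polyOf f y
        = Finset.univ.sup (fun I : Finset (Fin n) =>
            med (p (fun _ => φ ⊥)) (p (eTuple I)) (p (fun _ => φ ⊤)) ⊓ I.inf y) := by
          unfold polyOf
          exact Finset.sup_congr rfl (fun I _ => by rw [fHat_eq f hp φ hpf I])
      _ = med (p (fun _ => φ ⊥)) (p y) (p (fun _ => φ ⊤)) := (hF.dnf y).symm
      _ = med (f (fun _ => ⊥)) (p y) (f (fun _ => ⊤)) := by rw [hfbot, hftop]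
  · intro x
    rw [hpf (fun _ => x), ← med_const hp (φ x)]
end Main3


theorem statement_3 {X Y : Type*} [DistribLattice X] [BoundedOrder X]
    [DistribLattice Y] [BoundedOrder Y] {n : ℕ} (hn : 0 < n)
    (f : (Fin n → X) → Y) (hf : IsQuasiPolynomial f)
    (p : (Fin n → Y) → Y) (hp : IsLatticePolynomial p)
    (φ : X → Y) (hφ : ∀ x : X, φ x = med (φ ⊥) (φ x) (φ ⊤)) :
    ((∀ x, f x = p (fun i => φ (x i))) ↔
      ((∀ y : Fin n → Y, polyOf f y = med (f (fun _ => ⊥)) (p y) (f (fun _ => ⊤))) ∧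
       (∀ x : X, f (fun _ => x) = med (p (fun _ => ⊥)) (φ x) (p (fun _ => ⊤))))) ∧
    (∀ x : Fin n → X, f x = polyOf f (fun i => f (fun _ => x i))) := by
  obtain ⟨q, ψ, hq, hψ, hfq⟩ := hf
  have fwdq := forward f hq ψ hfq
  have part2 : ∀ x : Fin n → X, f x = polyOf f (fun i => f (fun _ => x i)) := by
    intro x
    have e1 : (fun i => f (fun _ => x i))
        = fun i => med (q (fun _ => ⊥)) (ψ (x i)) (q (fun _ => ⊤)) :=
      funext fun i => fwdq.2 (x i)
    rw [fwdq.1 (fun i => f (fun _ => x i)), e1]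
    have hfb : f (fun _ => ⊥) = q (fun _ => ψ ⊥) := hfq (fun _ => ⊥)
    have hft : f (fun _ => ⊤) = q (fun _ => ψ ⊤) := hfq (fun _ => ⊤)
    rw [hfb, hft,
      recover hq (ψ ⊥) (ψ ⊤) (fun i => (phi_bounds ψ hψ (x i)).1)
        (fun i => (phi_bounds ψ hψ (x i)).2), ← hfq x]
  refine ⟨⟨fun h => forward f hp φ h, fun hab => ?_⟩, part2⟩
  obtain ⟨ha, hb⟩ := hab
  intro x
  rw [part2 x, ha]
  have e1 : (fun i => f (fun _ => x i))
      = fun i => med (p (fun _ => ⊥)) (φ (x i)) (p (fun _ => ⊤)) :=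
    funext fun i => hb (x i)
  have hfb : f (fun _ => ⊥) = p (fun _ => φ ⊥) := by rw [hb ⊥, med_const hp]
  have hft : f (fun _ => ⊤) = p (fun _ => φ ⊤) := by rw [hb ⊤, med_const hp]
  rw [e1, hfb, hft,
    recover hp (φ ⊥) (φ ⊤) (fun i => (phi_bounds φ hφ (x i)).1)
      (fun i => (phi_bounds φ hφ (x i)).2)]
end

section
/- Let f : Xⁿ → X be a quasi-polynomial function. Then f is a polynomial function if and only if f is R_f-idempotent and δ_f is a lattice homomorphism whose range is a convex subset of X. -/
/-- A subset `S` of a lattice is convex. -/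
def IsConvexSet {X : Type*} [Lattice X] (S : Set X) : Prop :=
  ∀ a ∈ S, ∀ b ∈ S, ∀ c : X, a ≤ c → c ≤ b → c ∈ S

section PolyLemmas

variable {L : Type*} [DistribLattice L] [BoundedOrder L] {n : ℕ}

theorem poly_monotone {p : (Fin n → L) → L} (hp : IsLatticePolynomial p) : Monotone p := by
  induction hp with
  | proj i => exact fun x y h => h i
  | const c => exact monotone_const
  | inf _ _ ih1 ih2 => exact fun x y h => inf_le_inf (ih1 h) (ih2 h)
  | sup _ _ ih1 ih2 => exact fun x y h => sup_le_sup (ih1 h) (ih2 h)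

theorem polyA' {p : (Fin n → L) → L} (hp : IsLatticePolynomial p) (d : L) :
    ∀ y, p y ⊓ d ≤ p (fun i => y i ⊓ d) := by
  induction hp with
  | proj i => intro y; exact le_rfl
  | const c => intro y; exact inf_le_left
  | inf _ _ ih1 ih2 =>
      intro y; dsimp only
      exact le_inf (le_trans (inf_le_inf_right d inf_le_left) (ih1 y))
        (le_trans (inf_le_inf_right d inf_le_right) (ih2 y))
  | sup _ _ ih1 ih2 =>
      intro y; dsimp only
      rw [inf_sup_right]
      exact sup_le_sup (ih1 y) (ih2 y)

theorem polyA'' {p : (Fin n → L) → L} (hp : IsLatticePolynomial p) (d : L) :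
    p (fun _ => d) ≤ p (fun _ => ⊥) ⊔ d := by
  induction hp with
  | proj i => exact le_sup_right
  | const c => exact le_sup_left
  | inf _ _ ih1 ih2 =>
      dsimp only
      refine le_trans (inf_le_inf ih1 ih2) (le_of_eq ?_)
      rw [sup_inf_right]
  | sup _ _ ih1 ih2 =>
      dsimp only
      refine le_trans (sup_le_sup ih1 ih2) (le_of_eq ?_)
      rw [sup_sup_sup_comm, sup_idem]

theorem polyA {p : (Fin n → L) → L} (hp : IsLatticePolynomial p) (d : L) (y : Fin n → L) :
    p (fun i => y i ⊓ d) = p y ⊓ p (fun _ => d) := by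
  refine le_antisymm (le_inf (poly_monotone hp fun i => inf_le_left)
    (poly_monotone hp fun i => inf_le_right)) ?_
  calc p y ⊓ p (fun _ => d) ≤ p y ⊓ (p (fun _ => ⊥) ⊔ d) :=
        inf_le_inf_left _ (polyA'' hp d)
    _ = (p y ⊓ p (fun _ => ⊥)) ⊔ (p y ⊓ d) := inf_sup_left _ _ _
    _ ≤ p (fun i => y i ⊓ d) :=
        sup_le (le_trans inf_le_right (poly_monotone hp fun i => bot_le)) (polyA' hp d y)

theorem polyB' {p : (Fin n → L) → L} (hp : IsLatticePolynomial p) (c : L) :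
    ∀ y, p (fun i => y i ⊔ c) ≤ p y ⊔ c := by
  induction hp with
  | proj i => intro y; exact le_rfl
  | const k => intro y; exact le_sup_left
  | inf _ _ ih1 ih2 =>
      intro y; dsimp only
      refine le_trans (inf_le_inf (ih1 y) (ih2 y)) (le_of_eq ?_)
      rw [sup_inf_right]
  | sup _ _ ih1 ih2 =>
      intro y; dsimp only
      refine le_trans (sup_le_sup (ih1 y) (ih2 y)) (le_of_eq ?_)
      rw [sup_sup_sup_comm, sup_idem]

theorem polyB'' {p : (Fin n → L) → L} (hp : IsLatticePolynomial p) (c : L) :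
    p (fun _ => ⊤) ⊓ c ≤ p (fun _ => c) := by
  induction hp with
  | proj i => exact inf_le_right
  | const k => exact inf_le_left
  | inf _ _ ih1 ih2 =>
      dsimp only
      exact le_inf (le_trans (inf_le_inf_right c inf_le_left) ih1)
        (le_trans (inf_le_inf_right c inf_le_right) ih2)
  | sup _ _ ih1 ih2 =>
      dsimp only
      rw [inf_sup_right]
      exact sup_le_sup ih1 ih2

theorem polyB {p : (Fin n → L) → L} (hp : IsLatticePolynomial p) (c : L) (y : Fin n → L) :
    p (fun i => y i ⊔ c) = p y ⊔ p (fun _ => c) := by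
  refine le_antisymm ?_ (sup_le (poly_monotone hp fun i => le_sup_left)
    (poly_monotone hp fun i => le_sup_right))
  calc p (fun i => y i ⊔ c) ≤ (p y ⊔ c) ⊓ p (fun _ => ⊤) :=
        le_inf (polyB' hp c y) (poly_monotone hp fun i => le_top)
    _ = (p y ⊓ p (fun _ => ⊤)) ⊔ (c ⊓ p (fun _ => ⊤)) := inf_sup_right _ _ _
    _ ≤ p y ⊔ p (fun _ => c) := by
        refine sup_le (le_sup_of_le_left inf_le_left) (le_sup_of_le_right ?_)
        rw [inf_comm]
        exact polyB'' hp c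

/-- Median combination lemma for the diagonal formula, `⊓` case. -/
theorem med_inf_med {A₁ B₁ A₂ B₂ y : L} (h1 : A₁ ≤ B₁) (h2 : A₂ ≤ B₂) :
    (A₁ ⊔ y ⊓ B₁) ⊓ (A₂ ⊔ y ⊓ B₂) = (A₁ ⊓ A₂) ⊔ y ⊓ (B₁ ⊓ B₂) := by
  apply le_antisymm
  · rw [inf_sup_right, inf_sup_left, inf_sup_left]
    refine sup_le (sup_le ?_ ?_) (sup_le ?_ ?_)
    · exact le_sup_left
    · exact le_sup_of_le_right (le_inf (inf_le_right.trans inf_le_left)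
        (le_inf (inf_le_left.trans h1) (inf_le_right.trans inf_le_right)))
    · exact le_sup_of_le_right (le_inf (inf_le_left.trans inf_le_left)
        (le_inf (inf_le_left.trans inf_le_right) (inf_le_right.trans h2)))
    · exact le_sup_of_le_right (le_inf (inf_le_left.trans inf_le_left)
        (le_inf (inf_le_left.trans inf_le_right) (inf_le_right.trans inf_le_right)))
  · refine sup_le (le_inf (le_sup_of_le_left inf_le_left) (le_sup_of_le_left inf_le_right))
      (le_inf (le_sup_of_le_right (inf_le_inf_left y inf_le_left))
        (le_sup_of_le_right (inf_le_inf_left y inf_le_right)))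

/-- Diagonal formula: `p(y, …, y) = p(⊥̄) ⊔ (y ⊓ p(⊤̄))`. -/
theorem polyDiag {p : (Fin n → L) → L} (hp : IsLatticePolynomial p) (y : L) :
    p (fun _ => y) = p (fun _ => ⊥) ⊔ (y ⊓ p (fun _ => ⊤)) := by
  induction hp with
  | proj i => simp
  | const c => exact (sup_eq_left.mpr inf_le_right).symm
  | @inf p' q' h1 h2 ih1 ih2 =>
      dsimp only
      rw [ih1, ih2]
      exact med_inf_med (poly_monotone h1 fun i => bot_le) (poly_monotone h2 fun i => bot_le)
  | sup _ _ ih1 ih2 =>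
      dsimp only
      rw [ih1, ih2, inf_sup_left, sup_sup_sup_comm]

/-- Clipping lemma: clipping the arguments to `[p ⊥̄, p ⊤̄]` does not change the value. -/
theorem polyC {p : (Fin n → L) → L} (hp : IsLatticePolynomial p) (z : Fin n → L) :
    p (fun i => p (fun _ => ⊥) ⊔ (z i ⊓ p (fun _ => ⊤))) = p z := by
  have hm := poly_monotone hp
  have hAB : p (fun _ => (⊥:L)) ≤ p (fun _ => ⊤) := hm fun i => bot_le
  have hpA : p (fun _ => p (fun _ => (⊥:L))) = p (fun _ => ⊥) :=
    le_antisymm (by simpa using polyA'' hp (p (fun _ => ⊥))) (hm fun i => bot_le)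
  have hpB : p (fun _ => p (fun _ => (⊤:L))) = p (fun _ => ⊤) := by
    refine le_antisymm ?_ (by simpa using polyB'' hp (p (fun _ => ⊤)))
    have h := polyA'' hp (p (fun _ => (⊤:L)))
    rwa [sup_eq_right.mpr hAB] at h
  have e1 : (fun i => p (fun _ => (⊥:L)) ⊔ (z i ⊓ p (fun _ => ⊤)))
      = (fun i => (z i ⊓ p (fun _ => ⊤)) ⊔ p (fun _ => ⊥)) := by
    funext i; exact sup_comm _ _
  rw [e1, polyB hp (p (fun _ => ⊥)) (fun i => z i ⊓ p (fun _ => ⊤)),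
    polyA hp (p (fun _ => ⊤)) z, hpA, hpB,
    inf_eq_left.mpr (hm fun i => le_top), sup_eq_left.mpr (hm fun i => bot_le)]

/-- Composing a polynomial with a clip in each coordinate yields a polynomial. -/
theorem polyComp {p : (Fin n → L) → L} (hp : IsLatticePolynomial p) (a b : L) :
    IsLatticePolynomial (fun x : Fin n → L => p (fun i => a ⊔ (x i ⊓ b))) := by
  induction hp with
  | proj i => exact .sup (.const a) (.inf (.proj i) (.const b))
  | const c => exact .const c
  | inf _ _ ih1 ih2 => exact .inf ih1 ih2
  | sup _ _ ih1 ih2 => exact .sup ih1 ih2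

end PolyLemmas

theorem statement_9 {X : Type*} [DistribLattice X] [BoundedOrder X] {n : ℕ} (hn : 0 < n)
    (f : (Fin n → X) → X) (hf : IsQuasiPolynomial f) :
    IsLatticePolynomial f ↔
      ((∀ c ∈ Set.range f, f (fun _ => c) = c) ∧
       (∀ a b : X, f (fun _ => a ⊓ b) = f (fun _ => a) ⊓ f (fun _ => b) ∧
                   f (fun _ => a ⊔ b) = f (fun _ => a) ⊔ f (fun _ => b)) ∧
       IsConvexSet (Set.range (fun x : X => f (fun _ => x)))) := by
  obtain ⟨p, φ, hp, hφ, hfp⟩ := hf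
  constructor
  · intro hpoly
    have hm := poly_monotone hpoly
    have hd := polyDiag hpoly
    have hAB : f (fun _ => (⊥:X)) ≤ f (fun _ => (⊤:X)) := hm fun i => bot_le
    refine ⟨?_, ?_, ?_⟩
    · rintro c ⟨x, rfl⟩
      rw [hd (f x), inf_eq_left.mpr (hm fun i => le_top),
        sup_eq_right.mpr (hm fun i => bot_le)]
    · intro x y
      constructor
      · rw [hd (x ⊓ y), hd x, hd y, ← sup_inf_left, inf_inf_distrib_right]
      · rw [hd (x ⊔ y), hd x, hd y]
        conv_rhs => rw [sup_sup_sup_comm, sup_idem]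
        rw [inf_sup_right]
    · rintro s ⟨xs, rfl⟩ t ⟨xt, rfl⟩ c hsc hct
      dsimp only at hsc hct ⊢
      have hAc : f (fun _ => (⊥:X)) ≤ c := le_trans (by rw [hd xs]; exact le_sup_left) hsc
      have hcB : c ≤ f (fun _ => (⊤:X)) :=
        le_trans hct (by rw [hd xt]; exact sup_le hAB inf_le_right)
      refine ⟨c, ?_⟩
      show f (fun _ => c) = c
      rw [hd c, inf_eq_left.mpr hcB, sup_eq_right.mpr hAc]
  · rintro ⟨h1, h2, h3⟩
    have hδφ : ∀ t : X, f (fun _ => t)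
        = p (fun _ => ⊥) ⊔ (φ t ⊓ p (fun _ => ⊤)) := by
      intro t
      rw [hfp (fun _ => t)]
      exact polyDiag hp (φ t)
    have hmono : ∀ u v : X, u ≤ v → f (fun _ => u) ≤ f (fun _ => v) := by
      intro u v huv
      have h := (h2 u v).1
      rw [inf_eq_left.mpr huv] at h
      rw [h]; exact inf_le_right
    have hfix : ∀ t : X, f (fun _ => f (fun _ => t)) = f (fun _ => t) :=
      fun t => h1 _ ⟨_, rfl⟩
    have hab : f (fun _ => (⊥:X)) ≤ f (fun _ => (⊤:X)) := hmono ⊥ ⊤ bot_le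
    have step4 : ∀ x : X, f (fun _ => x)
        = f (fun _ => (⊥:X)) ⊔ (x ⊓ f (fun _ => (⊤:X))) := by
      intro x
      obtain ⟨t, ht⟩ := h3 (f (fun _ => (⊥:X))) ⟨⊥, rfl⟩ (f (fun _ => (⊤:X))) ⟨⊤, rfl⟩
        (f (fun _ => (⊥:X)) ⊔ (x ⊓ f (fun _ => (⊤:X)))) le_sup_left (sup_le hab inf_le_right)
      have ht' : f (fun _ => t) = f (fun _ => (⊥:X)) ⊔ (x ⊓ f (fun _ => (⊤:X))) := ht
      have hm1 : f (fun _ => (f (fun _ => (⊥:X)) ⊔ (x ⊓ f (fun _ => (⊤:X)))))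
          = f (fun _ => (⊥:X)) ⊔ (x ⊓ f (fun _ => (⊤:X))) := by
        rw [← ht']; exact hfix t
      have e1 : f (fun _ => (f (fun _ => (⊥:X)) ⊔ (x ⊓ f (fun _ => (⊤:X)))))
          = f (fun _ => f (fun _ => (⊥:X)))
            ⊔ (f (fun _ => x) ⊓ f (fun _ => f (fun _ => (⊤:X)))) := by
        rw [(h2 (f (fun _ => (⊥:X))) (x ⊓ f (fun _ => (⊤:X)))).2,
          (h2 x (f (fun _ => (⊤:X)))).1]
      have hax : f (fun _ => (⊥:X)) ≤ f (fun _ => x) := hmono ⊥ x bot_le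
      have hxb : f (fun _ => x) ≤ f (fun _ => (⊤:X)) := hmono x ⊤ le_top
      calc f (fun _ => x)
          = f (fun _ => (⊥:X)) ⊔ (f (fun _ => x) ⊓ f (fun _ => (⊤:X))) := by
            rw [inf_eq_left.mpr hxb, sup_eq_right.mpr hax]
        _ = f (fun _ => (f (fun _ => (⊥:X)) ⊔ (x ⊓ f (fun _ => (⊤:X))))) := by
            rw [e1, hfix ⊥, hfix ⊤]
        _ = _ := hm1
    have key : ∀ x, f x
        = p (fun i => f (fun _ => (⊥:X)) ⊔ (x i ⊓ f (fun _ => (⊤:X)))) := by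
      intro x
      rw [hfp x, ← polyC hp (fun i => φ (x i))]
      congr 1
      funext i
      rw [← hδφ (x i), step4 (x i)]
    have hfeq : f = fun x => p (fun i => f (fun _ => (⊥:X)) ⊔ (x i ⊓ f (fun _ => (⊤:X)))) :=
      funext key
    rw [hfeq]
    exact polyComp hp _ _
end
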